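/- For any N ≥ 1 and β ∈ ℝ, the constant vector (1)_{σ ∈ Sym(N)} is an eigenvector of the Cayley distance kernel matrix K(σ₁,σ₂) = e^{−β·d_C(σ₁,σ₂)}, with eigenvalue e^{−βN} ∏_{k=0}^{N−1}(e^β + k), which is strictly positive. -/

import Mathlib

/-!
Left multiplication by `σ₁` turns every row sum of the kernel into
`e^{-βN} ∑_σ (e^β)^{#cycles σ}`, so the constant vector is an eigenvector. The cycle generating
polynomial `∑_{σ ∈ Sym(n)} x^{#cycles σ}` is the rising factorial `x (x+1) ⋯ (x+n-1)`: a
permutation of `Fin (n+1)` is `swap 0 p` times a permutation fixing `0`; the choice `p = 0`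
makes `0` a new fixed point, while each of the `n` choices `p ≠ 0` inserts `0` into an
existing cycle.
-/

open Equiv

/-- Number of cycles (orbits, including fixed points) of a permutation. -/
def numCycles {N : ℕ} (σ : Perm (Fin N)) : ℕ :=
  (Finset.univ.filter fun x => σ x = x).card + σ.cycleType.card

/-- Cayley distance on `Sym(N)`: `d_C(σ₁,σ₂) = N − #cycles(σ₁⁻¹∘σ₂)`. -/
def cayleyDist {N : ℕ} (σ₁ σ₂ : Perm (Fin N)) : ℕ :=
  N - numCycles (σ₁⁻¹ * σ₂)

/-- The Cayley distance kernel at inverse temperature `β` on `Sym(N)`. -/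
noncomputable def cayleyKernel (N : ℕ) (β : ℝ) :
    Matrix (Perm (Fin N)) (Perm (Fin N)) ℝ :=
  Matrix.of fun σ₁ σ₂ => Real.exp (-β * (cayleyDist σ₁ σ₂ : ℝ))

open Finset

namespace Equiv.Perm

variable {α : Type*} [Fintype α] [DecidableEq α]

theorem card_parts_partition (σ : Perm α) :
    σ.partition.parts.card = σ.cycleType.card + (Fintype.card α - #σ.support) := by
  simp [parts_partition]

theorem card_cycleType_swap_mul_of_apply_apply_ne {σ : Perm α} {x : α} (hx : σ x ≠ x)
    (hσσx : σ (σ x) ≠ x) : (swap x (σ x) * σ).cycleType.card = σ.cycleType.card := by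
  set c := σ.cycleOf x
  have hc : c.IsCycle := isCycle_cycleOf σ hx
  have hcx : c x = σ x := cycleOf_apply_self σ x
  have hccx : c (c x) = σ (σ x) := by rw [hcx, cycleOf_apply_apply_self]
  have hdc : Disjoint (σ * c⁻¹) c :=
    disjoint_mul_inv_of_mem_cycleFactorsFinset <|
      cycleOf_mem_cycleFactorsFinset_iff.2 (mem_support.2 hx)
  have hc' : (swap x (c x) * c).IsCycle := hc.swap_mul (hcx ▸ hx) (hccx ▸ hσσx)
  have hdc' : Disjoint (swap x (c x) * c) (σ * c⁻¹) :=
    hdc.symm.mono (support_swap_mul_eq c x (hccx ▸ hσσx) ▸ sdiff_subset) subset_rfl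
  have hσ : σ * c⁻¹ * c = σ := inv_mul_cancel_right σ c
  have hτ : swap x (c x) * c * (σ * c⁻¹) = swap x (σ x) * σ := by
    rw [mul_assoc, ← hdc.commute.eq, hσ, hcx]
  rw [← hτ, hdc'.cycleType_mul, ← hσ, hdc.cycleType_mul, hc.cycleType, hc'.cycleType]
  simp [add_comm]

theorem card_parts_partition_swap_mul {σ : Perm α} {x : α} (hx : σ x ≠ x) :
    (swap x (σ x) * σ).partition.parts.card = σ.partition.parts.card + 1 := by
  have hσ := σ.support.card_le_univ
  rw [card_parts_partition, card_parts_partition]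
  -- either the 2-cycle `(x σx)` splits into two fixed points, or `x` leaves a longer cycle
  by_cases hσσx : σ (σ x) = x
  · set τ := swap x (σ x) * σ
    have hdisj : Disjoint (swap x (σ x)) τ := by
      intro y
      by_cases hy : y = x ∨ y = σ x
      · right
        rcases hy with rfl | rfl <;> simp [τ, hσσx]
      · exact Or.inl (swap_apply_of_ne_of_ne (not_or.1 hy).1 (not_or.1 hy).2)
    have hστ : swap x (σ x) * τ = σ := swap_mul_self_mul _ _ _
    have hsupp := hdisj.card_support_mul
    have hcyc := congrArg Multiset.card hdisj.cycleType_mul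
    rw [hστ, card_support_swap hx.symm] at hsupp
    rw [hστ, (isCycle_swap hx.symm).cycleType, card_support_swap hx.symm] at hcyc
    simp only [Multiset.card_add, Multiset.card_singleton] at hcyc
    omega
  · have hsupp : (swap x (σ x) * σ).support = σ.support \ {x} := support_swap_mul_eq σ x hσσx
    have hx' : x ∈ σ.support := mem_support.2 hx
    rw [card_cycleType_swap_mul_of_apply_apply_ne hx hσσx, hsupp,
      card_sdiff_of_subset (singleton_subset_iff.2 hx'), card_singleton]
    have : 0 < #σ.support := card_pos.2 ⟨x, hx'⟩
    omega

theorem card_parts_partition_swap_mul_of_apply_eq {σ : Perm α} {x y : α} (hxy : x ≠ y)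
    (hx : σ x = x) : (swap x y * σ).partition.parts.card + 1 = σ.partition.parts.card := by
  have hτx : (swap x y * σ) x = y := by rw [mul_apply, hx, swap_apply_left]
  have := card_parts_partition_swap_mul (σ := swap x y * σ) (x := x) (by rw [hτx]; exact hxy.symm)
  rwa [hτx, swap_mul_self_mul, eq_comm] at this

theorem card_parts_partition_extendDomain {β : Type*} [Fintype β] [DecidableEq β] {p : β → Prop}
    [DecidablePred p] (f : α ≃ Subtype p) (σ : Perm α) :
    (σ.extendDomain f).partition.parts.card
      = σ.partition.parts.card + (Fintype.card β - Fintype.card α) := by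
  have hα := σ.support.card_le_univ
  have hαβ : Fintype.card α ≤ Fintype.card β :=
    (Fintype.card_congr f).le.trans (Fintype.card_subtype_le p)
  rw [card_parts_partition, card_parts_partition, cycleType_extendDomain,
    card_support_extend_domain]
  omega

theorem decomposeFin_symm_zero {n : ℕ} (e : Perm (Fin n)) :
    decomposeFin.symm (0, e) = e.extendDomain (finSuccAboveEquiv 0) := by
  refine Equiv.ext fun x => Fin.cases ?_ (fun i => ?_) x
  · rw [decomposeFin_symm_apply_zero, extendDomain_apply_not_subtype _ _ (by simp)]
  · rw [decomposeFin_symm_apply_succ, swap_self, refl_apply]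
    convert (extendDomain_apply_image e (finSuccAboveEquiv 0) i).symm using 2 <;>
      simp [finSuccAboveEquiv_apply]

theorem decomposeFin_symm_eq_swap_mul {n : ℕ} (p : Fin (n + 1)) (e : Perm (Fin n)) :
    decomposeFin.symm (p, e) = swap 0 p * decomposeFin.symm (0, e) := by
  ext x
  refine Fin.cases ?_ (fun i => ?_) x <;> simp

theorem card_parts_partition_decomposeFin_symm {n : ℕ} (p : Fin (n + 1)) (e : Perm (Fin n)) :
    (decomposeFin.symm (p, e)).partition.parts.card
      = e.partition.parts.card + if p = 0 then 1 else 0 := by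
  have h0 : (decomposeFin.symm (0, e)).partition.parts.card = e.partition.parts.card + 1 := by
    simp [decomposeFin_symm_zero, card_parts_partition_extendDomain]
  split_ifs with hp
  · rw [hp, h0]
  · have := card_parts_partition_swap_mul_of_apply_eq (Ne.symm hp)
      (decomposeFin_symm_apply_zero 0 e)
    rw [decomposeFin_symm_eq_swap_mul]
    omega

theorem sum_pow_card_parts_partition {R : Type*} [CommSemiring R] (n : ℕ) (x : R) :
    ∑ σ : Perm (Fin n), x ^ σ.partition.parts.card = ∏ k ∈ range n, (x + k) := by
  induction n with
  | zero => simp [Subsingleton.elim _ (1 : Perm (Fin 0)), card_parts_partition]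
  | succ n ih =>
    have fiber (e : Perm (Fin n)) :
        ∑ p, x ^ (decomposeFin.symm (p, e)).partition.parts.card
          = (x + n) * x ^ e.partition.parts.card := by
      simp only [card_parts_partition_decomposeFin_symm, Fin.sum_univ_succ, if_pos,
        Fin.succ_ne_zero, if_false, sum_const, card_univ, Fintype.card_fin, nsmul_eq_mul]
      ring
    rw [← decomposeFin.symm.sum_comp, Fintype.sum_prod_type_right]
    simp only [fiber, ← mul_sum, ih, prod_range_succ, mul_comm]

end Equiv.Perm

theorem numCycles_eq_card_parts_partition {N : ℕ} (σ : Perm (Fin N)) :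
    numCycles σ = σ.partition.parts.card := by
  have := card_filter_add_card_filter_not (s := univ) fun x => σ x = x
  rw [card_univ, Fintype.card_fin] at this
  rw [numCycles, Perm.card_parts_partition, Fintype.card_fin, Perm.support]
  simp only [ne_eq] at *
  omega

theorem numCycles_le {N : ℕ} (σ : Perm (Fin N)) : numCycles σ ≤ N := by
  rw [numCycles_eq_card_parts_partition]
  simpa [σ.partition.parts_sum] using
    Multiset.card_nsmul_le_sum (a := 1) fun _ => σ.partition.parts_pos

theorem cayleyKernel_apply_mul (N : ℕ) (β : ℝ) (σ τ : Perm (Fin N)) :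
    cayleyKernel N β σ (σ * τ) = Real.exp (-β * N) * Real.exp β ^ numCycles τ := by
  rw [cayleyKernel, Matrix.of_apply, cayleyDist, inv_mul_cancel_left,
    Nat.cast_sub (numCycles_le τ), ← Real.exp_nat_mul, ← Real.exp_add]
  ring_nf

theorem sum_cayleyKernel_row (N : ℕ) (β : ℝ) (σ : Perm (Fin N)) :
    ∑ τ, cayleyKernel N β σ τ = Real.exp (-β * N) * ∏ k ∈ range N, (Real.exp β + k) := by
  rw [← Equiv.sum_comp (Equiv.mulLeft σ)]
  simp only [coe_mulLeft, cayleyKernel_apply_mul, ← mul_sum, numCycles_eq_card_parts_partition,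
    Perm.sum_pow_card_parts_partition]

theorem const_eigenvector_cayleyKernel_general (N : ℕ) (β : ℝ) :
    (cayleyKernel N β).mulVec (fun _ => (1 : ℝ))
      = (Real.exp (-β * N) * ∏ k ∈ Finset.range N, (Real.exp β + (k : ℝ))) •
        (fun _ => (1 : ℝ)) ∧
    0 < Real.exp (-β * N) * ∏ k ∈ Finset.range N, (Real.exp β + (k : ℝ)) := by
  refine ⟨funext fun σ => ?_, by positivity⟩
  simpa [Matrix.mulVec, dotProduct] using sum_cayleyKernel_row N β σ

/-- For any , the constant vector is an eigenvector of the Cayley distance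
kernel with eigenvalue `e^{−βN} ∏_{k=0}^{N−1}(e^β + k)`, which is positive. -/
theorem const_eigenvector_cayleyKernel (N : ℕ) (hN : 1 ≤ N) (β : ℝ) :
    (cayleyKernel N β).mulVec (fun _ => (1 : ℝ))
      = (Real.exp (-β * N) * ∏ k ∈ Finset.range N, (Real.exp β + (k : ℝ))) •
        (fun _ => (1 : ℝ)) ∧
    0 < Real.exp (-β * N) * ∏ k ∈ Finset.range N, (Real.exp β + (k : ℝ)) :=
  const_eigenvector_cayleyKernel_general N β
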